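/- Let ε₀ > 0, β ∈ ℝ∖{0}, α ∈ ℝ. Suppose R : Δ_{ε₀} → [−1,1] is C¹-smooth and satisfies 2 Re( iβ z R_z(z) ) = −Re( i a₁(z) ) for all z ∈ Δ_{ε₀}, where a₁ is a nonzero holomorphic function on Δ_{ε₀}. Let δ₀ = 1/(2|α|) if α ≠ 0 and δ₀ = +∞ if α = 0, and define f : Δ_{ε₀} × (−δ₀,δ₀) → ℝ by f(z,t) = −(1/α) log| cos(R(z)+αt)/cos(R(z)) | if α ≠ 0 and f(z,t) = tan(R(z))·t if α = 0. Then Re[ 2iαβ z f_z(z,t) + ( f_t(z,t) − tan(R(z)) )·i a₁(z) ] = 0 for all (z,t) ∈ Δ_{ε₀} × (−δ₀,δ₀). -/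

import Mathlib

/-!
Write `f(z,t) = φ(R z, t)` with `φ(x,t) = -(1/α) log |cos (x+αt) / cos x|`. Then
`α ∂ₓφ = tan (x+αt) - tan x` and `∂ₜφ = tan (x+αt)`, so the chain rule gives
`α f_z = (f_t - tan R) R_z`, and the expression equals
`(f_t - tan R) · (2 Re(iβz R_z) + Re(i a₁)) = 0`. Since `|R| ≤ 1` and `|αt| < 1/2`, all
cosines involved stay positive. For `α = 0` both terms vanish separately.
-/

open Filter Set Metric Complex

noncomputable def wDeriv (u : ℂ → ℝ) (z : ℂ) : ℂ :=
  (((fderiv ℝ u z) 1 : ℝ) - Complex.I * ((fderiv ℝ u z) Complex.I : ℝ)) / 2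

theorem Filter.EventuallyEq.wDeriv_eq {u v : ℂ → ℝ} {z : ℂ} (h : u =ᶠ[nhds z] v) :
    wDeriv u z = wDeriv v z := by
  simp only [wDeriv, h.fderiv_eq]

theorem wDeriv_comp {u : ℂ → ℝ} {g : ℝ → ℝ} {g' : ℝ} {z : ℂ}
    (hg : HasDerivAt g g' (u z)) (hu : DifferentiableAt ℝ u z) :
    wDeriv (g ∘ u) z = g' * wDeriv u z := by
  simp only [wDeriv, (hg.comp_hasFDerivAt z hu.hasFDerivAt).fderiv,
    smul_apply, smul_eq_mul]
  push_cast
  ring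

namespace Real

theorem cos_add_pos_of_abs_le_one {x y : ℝ} (hx : |x| ≤ 1) (hy : |y| < 1 / 2) :
    0 < cos (x + y) := by
  have hπ : (3 : ℝ) < π := pi_gt_three
  have hxy : |x + y| < 3 / 2 := (abs_add_le x y).trans_lt (by linarith)
  exact cos_pos_of_mem_Ioo ⟨by linarith [neg_abs_le (x + y)], by linarith [le_abs_self (x + y)]⟩

theorem hasDerivAt_log_abs_cos_add_div_cos {c x : ℝ} (hx : cos x ≠ 0) (hxc : cos (x + c) ≠ 0) :
    HasDerivAt (fun y => log |cos (y + c) / cos y|) (tan x - tan (x + c)) x := by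
  simp only [log_abs]
  refine ((((hasDerivAt_id' x).add_const c).cos.div (hasDerivAt_cos x) hx).log
    (div_ne_zero hxc hx)).congr_deriv ?_
  simp only [tan_eq_sin_div_cos, Pi.div_apply]
  field_simp
  ring

theorem hasDerivAt_log_abs_cos_add_mul_div_cos {α x s : ℝ} (hx : cos x ≠ 0)
    (hxs : cos (x + α * s) ≠ 0) :
    HasDerivAt (fun s => log |cos (x + α * s) / cos x|) (-(α * tan (x + α * s))) s := by
  simp only [log_abs]
  refine ((((hasDerivAt_id' s).const_mul α).const_add x).cos.div_const (cos x)).log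
    (div_ne_zero hxs hx) |>.congr_deriv ?_
  simp only [tan_eq_sin_div_cos]
  field_simp

end Real

theorem mul_wDeriv_neg_inv_mul_log_abs_cos_ratio {R : ℂ → ℝ} {z : ℂ} {α t : ℝ} (hα : α ≠ 0)
    (hR : DifferentiableAt ℝ R z) (hcos : Real.cos (R z) ≠ 0)
    (hcos' : Real.cos (R z + α * t) ≠ 0) :
    α * wDeriv (fun w => -(1 / α) * Real.log |Real.cos (R w + α * t) / Real.cos (R w)|) z
      = ((Real.tan (R z + α * t) - Real.tan (R z) : ℝ) : ℂ) * wDeriv R z := by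
  have h := wDeriv_comp
    ((Real.hasDerivAt_log_abs_cos_add_div_cos hcos hcos').const_mul (-(1 / α))) hR
  rw [Function.comp_def] at h
  rw [h, ← mul_assoc, ← ofReal_mul]
  congr 2
  field_simp
  ring

theorem deriv_neg_inv_mul_log_abs_cos_ratio {α x t : ℝ} (hα : α ≠ 0) (hcos : Real.cos x ≠ 0)
    (hcos' : Real.cos (x + α * t) ≠ 0) :
    deriv (fun s => -(1 / α) * Real.log |Real.cos (x + α * s) / Real.cos x|) t
      = Real.tan (x + α * t) := by
  rw [((Real.hasDerivAt_log_abs_cos_add_mul_div_cos hcos hcos').const_mul _).deriv]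
  field_simp

theorem re_transport_eq_zero {α β c : ℝ} {z a Wf WR : ℂ} (hW : α * Wf = c * WR)
    (hR : 2 * (I * β * z * WR).re = -(I * a).re) :
    (2 * I * α * β * z * Wf + (c : ℂ) * I * a).re = 0 := by
  have h : 2 * I * α * β * z * Wf + (c : ℂ) * I * a
      = c * ((2 : ℝ) * (I * β * z * WR) + I * a) := by
    push_cast
    linear_combination (2 * I * β * z) * hW
  rw [h, re_ofReal_mul, add_re, re_ofReal_mul, hR]
  ring

theorem abs_mul_lt_half_of_mem_Ioo {α s : ℝ} (hα : α ≠ 0)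
    (hs : s ∈ Ioo (-(1 / (2 * |α|))) (1 / (2 * |α|))) : |α * s| < 1 / 2 := by
  have hα' : 0 < |α| := abs_pos.2 hα
  rw [abs_mul, ← lt_div_iff₀' hα', div_div]
  exact abs_lt.2 hs

theorem stmt_14_general (ε₀ β α : ℝ)
    (R : ℂ → ℝ) (hRval : ∀ z : ℂ, R z ∈ Set.Icc (-1 : ℝ) 1)
    (hRsm : ContDiffOn ℝ 1 R (ball (0:ℂ) ε₀))
    (a₁ : ℂ → ℂ)
    (hReq : ∀ z ∈ ball (0:ℂ) ε₀,
      2 * ((Complex.I * (β:ℂ) * z * wDeriv R z).re) = -((Complex.I * a₁ z).re))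
    (T : Set ℝ)
    (hT : (α ≠ 0 → T = Set.Ioo (-(1/(2*|α|))) (1/(2*|α|))) ∧ (α = 0 → T = Set.univ))
    (f : ℂ → ℝ → ℝ)
    (hf : (α ≠ 0 → ∀ z ∈ ball (0:ℂ) ε₀, ∀ t ∈ T,
            f z t = -(1/α) * Real.log |Real.cos (R z + α * t) / Real.cos (R z)|) ∧
          (α = 0 → ∀ z ∈ ball (0:ℂ) ε₀, ∀ t ∈ T,
            f z t = Real.tan (R z) * t)) :
    ∀ z ∈ ball (0:ℂ) ε₀, ∀ t ∈ T,
      (2 * Complex.I * (α:ℂ) * (β:ℂ) * z * wDeriv (fun w => f w t) z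
        + ((deriv (fun s => f z s) t : ℝ) - (Real.tan (R z) : ℝ) : ℂ)
            * Complex.I * a₁ z).re = 0 := by
  intro z hz t ht
  rcases eq_or_ne α 0 with rfl | hα
  · have hfz : (fun s => f z s) = fun s => Real.tan (R z) * s :=
      funext fun s => hf.2 rfl z hz s (by simp [hT.2 rfl])
    simp [hfz]
  have hR1 : |R z| ≤ 1 := abs_le.2 (hRval z)
  have hcosR : Real.cos (R z) ≠ 0 := by
    simpa using (Real.cos_add_pos_of_abs_le_one hR1 (y := 0) (by norm_num)).ne'
  have hcosRt : ∀ s ∈ T, Real.cos (R z + α * s) ≠ 0 := fun s hs =>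
    (Real.cos_add_pos_of_abs_le_one hR1
      (abs_mul_lt_half_of_mem_Ioo hα (hT.1 hα ▸ hs))).ne'
  have hW : α * wDeriv (fun w => f w t) z
      = ((Real.tan (R z + α * t) - Real.tan (R z) : ℝ) : ℂ) * wDeriv R z := by
    have hfeq : (fun w => f w t) =ᶠ[nhds z]
        (fun w => -(1 / α) * Real.log |Real.cos (R w + α * t) / Real.cos (R w)|) := by
      filter_upwards [isOpen_ball.mem_nhds hz] with w hw using hf.1 hα w hw t ht
    rw [hfeq.wDeriv_eq]
    exact mul_wDeriv_neg_inv_mul_log_abs_cos_ratio hα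
      ((hRsm.differentiableOn one_ne_zero).differentiableAt (isOpen_ball.mem_nhds hz))
      hcosR (hcosRt t ht)
  have hD : deriv (fun s => f z s) t = Real.tan (R z + α * t) := by
    have hfeq : (fun s => f z s) =ᶠ[nhds t]
        (fun s => -(1 / α) * Real.log |Real.cos (R z + α * s) / Real.cos (R z)|) := by
      filter_upwards [(hT.1 hα ▸ isOpen_Ioo : IsOpen T).mem_nhds ht] with s hs
        using hf.1 hα z hz s hs
    rw [hfeq.deriv_eq, deriv_neg_inv_mul_log_abs_cos_ratio hα hcosR (hcosRt t ht)]
  rw [hD]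
  exact_mod_cast re_transport_eq_zero hW (hReq z hz)

/-- Corollary A.5 (pde4): with `R : Δ_{ε₀} → [−1,1]` of class `C¹` satisfying
`2Re(iβz R_z(z)) = −Re(i a₁(z))` and `f` defined by the explicit formulas, one has
`Re[2iαβz f_z(z,t) + (f_t(z,t) − tan(R(z)))·i a₁(z)] = 0` on `Δ_{ε₀} × (−δ₀, δ₀)`. -/
theorem stmt_14 (ε₀ β α : ℝ) (hε₀ : 0 < ε₀) (hβ : β ≠ 0)
    (R : ℂ → ℝ) (hRval : ∀ z : ℂ, R z ∈ Set.Icc (-1 : ℝ) 1)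
    (hRsm : ContDiffOn ℝ 1 R (ball (0:ℂ) ε₀))
    (a₁ : ℂ → ℂ) (ha₁hol : DifferentiableOn ℂ a₁ (ball (0:ℂ) ε₀))
    (ha₁ne : ∃ z ∈ ball (0:ℂ) ε₀, a₁ z ≠ 0)
    (hReq : ∀ z ∈ ball (0:ℂ) ε₀,
      2 * ((Complex.I * (β:ℂ) * z * wDeriv R z).re) = -((Complex.I * a₁ z).re))
    (T : Set ℝ)
    (hT : (α ≠ 0 → T = Set.Ioo (-(1/(2*|α|))) (1/(2*|α|))) ∧ (α = 0 → T = Set.univ))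
    (f : ℂ → ℝ → ℝ)
    (hf : (α ≠ 0 → ∀ z ∈ ball (0:ℂ) ε₀, ∀ t ∈ T,
            f z t = -(1/α) * Real.log |Real.cos (R z + α * t) / Real.cos (R z)|) ∧
          (α = 0 → ∀ z ∈ ball (0:ℂ) ε₀, ∀ t ∈ T,
            f z t = Real.tan (R z) * t)) :
    ∀ z ∈ ball (0:ℂ) ε₀, ∀ t ∈ T,
      (2 * Complex.I * (α:ℂ) * (β:ℂ) * z * wDeriv (fun w => f w t) z
        + ((deriv (fun s => f z s) t : ℝ) - (Real.tan (R z) : ℝ) : ℂ)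
            * Complex.I * a₁ z).re = 0 :=
  stmt_14_general ε₀ β α R hRval hRsm a₁ hReq T hT f hf
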